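/- arXiv:1307.5625 — 2 statements merged into one kernel-verified Lean document; each statement's English description precedes it below -/
import Mathlib

section
/- (Proposition 5.3) Let φ : 𝔸 ⇸ 𝔹 and ψ : 𝔹 ⇸ 𝔸 be Q-distributors. Then φ is left adjoint to ψ in the category of Q-distributors, i.e. 𝔸(x,x') ≤ ⨆_{y∈B} (ψ(y,x') * φ(x,y)) for all x,x' ∈ A and ⨆_{x∈A} (φ(x,y') * ψ(y,x)) ≤ 𝔹(y,y') for all y,y' ∈ B, if and only if ψ* is Q-enriched left adjoint to φ*, i.e. ⨅_{y∈B} (λ(y) ↙ ψ*(μ)(y)) = ⨅_{x∈A} (φ*(λ)(x) ↙ μ(x)) for all contravariant presheaves μ on 𝔸 and λ on 𝔹, where ψ*(μ)(y) = ⨆_{x∈A} (μ(x) * ψ(y,x)) and φ*(λ)(x) = ⨆_{y∈B} (λ(y) * φ(x,y)). -/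
open IsQuantale

variable {Q : Type*} [Monoid Q] [CompleteLattice Q] [IsQuantale Q]

/-- Left implication `x ↙ y`: the largest `z` with `z * y ≤ x`. -/
def lres (x y : Q) : Q := sSup {z | z * y ≤ x}

/-- Right implication `y ↘ x`: the largest `z` with `y * z ≤ x`. -/
def rres (y x : Q) : Q := sSup {z | y * z ≤ x}

/-- A Q-category structure on a type `A`. -/
structure IsQCat {A : Type*} (𝔸 : A → A → Q) : Prop where
  refl : ∀ x, 1 ≤ 𝔸 x x
  comp : ∀ x y z, 𝔸 y z * 𝔸 x y ≤ 𝔸 x z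

/-- A Q-distributor `φ : 𝔸 ⇸ 𝔹`. -/
structure IsQDist {A B : Type*} (𝔸 : A → A → Q) (𝔹 : B → B → Q) (φ : A → B → Q) : Prop where
  comp_left : ∀ x y y', 𝔹 y' y * φ x y' ≤ φ x y
  comp_right : ∀ x x' y, φ x' y * 𝔸 x x' ≤ φ x y

/-- A Q-functor `F : 𝔸 → 𝔹`. -/
def IsQFunctor {A B : Type*} (𝔸 : A → A → Q) (𝔹 : B → B → Q) (F : A → B) : Prop :=
  ∀ x x', 𝔸 x x' ≤ 𝔹 (F x) (F x')

/-- A contravariant presheaf on `𝔸`. -/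
def IsContraPsh {A : Type*} (𝔸 : A → A → Q) (μ : A → Q) : Prop :=
  ∀ x x', μ x' * 𝔸 x x' ≤ μ x

/-- A covariant presheaf on `𝔹`. -/
def IsCoPsh {B : Type*} (𝔹 : B → B → Q) (lam : B → Q) : Prop :=
  ∀ y y', 𝔹 y y' * lam y ≤ lam y'

/-- `φ↑(μ)(y) = ⨅ x, φ(x,y) ↙ μ(x)`. -/
def phiUp {A B : Type*} (φ : A → B → Q) (μ : A → Q) : B → Q :=
  fun y => ⨅ x, lres (φ x y) (μ x)

/-- `φ↓(λ)(x) = ⨅ y, λ(y) ↘ φ(x,y)`. -/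
def phiDown {A B : Type*} (φ : A → B → Q) (lam : B → Q) : A → Q :=
  fun x => ⨅ y, rres (lam y) (φ x y)

/-- `φ*(λ)(x) = ⨆ y, λ(y) * φ(x,y)`. -/
def phiStar {A B : Type*} (φ : A → B → Q) (lam : B → Q) : A → Q :=
  fun x => ⨆ y, lam y * φ x y

/-- `φ_*(μ)(y) = ⨅ x, μ(x) ↙ φ(x,y)`. -/
def phiLow {A B : Type*} (φ : A → B → Q) (μ : A → Q) : B → Q :=
  fun y => ⨅ x, lres (μ x) (φ x y)

/-- The underlying set of the Q-category `P𝔸` of contravariant presheaves. -/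
abbrev CPsh {A : Type*} (𝔸 : A → A → Q) := {μ : A → Q // ∀ x x', μ x' * 𝔸 x x' ≤ μ x}

/-- The underlying set of the Q-category `P†𝔹` of covariant presheaves. -/
abbrev CoPsh {B : Type*} (𝔹 : B → B → Q) := {lam : B → Q // ∀ y y', 𝔹 y y' * lam y ≤ lam y'}

/-- The Yoneda embedding `x ↦ 𝔸(·,x)`. -/
def yonedaP {A : Type*} {𝔸 : A → A → Q} (hA : IsQCat 𝔸) (x : A) : CPsh 𝔸 :=
  ⟨fun x' => 𝔸 x' x, fun a b => hA.comp a b x⟩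

lemma le_lres_iff {z x y : Q} : z ≤ lres x y ↔ z * y ≤ x :=
  Quantale.leftMulResiduation_le_iff_mul_le

/-- Proposition 5.3: `φ ⊣ ψ` in Q-Dist iff `ψ* ⊣ φ*` in the Q-enriched sense. -/
theorem dist_adjoint_iff_star_adjoint {A B : Type*} {𝔸 : A → A → Q} {𝔹 : B → B → Q}
    (hA : IsQCat 𝔸) (hB : IsQCat 𝔹)
    (φ : A → B → Q) (hφ : IsQDist 𝔸 𝔹 φ)
    (ψ : B → A → Q) (hψ : IsQDist 𝔹 𝔸 ψ) :
    ((∀ x x', 𝔸 x x' ≤ ⨆ y, ψ y x' * φ x y) ∧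
      (∀ y y', (⨆ x, φ x y' * ψ y x) ≤ 𝔹 y y')) ↔
    (∀ (μ : A → Q) (lam : B → Q), IsContraPsh 𝔸 μ → IsContraPsh 𝔹 lam →
      (⨅ y, lres (lam y) (phiStar ψ μ y)) = ⨅ x, lres (phiStar φ lam x) (μ x)) := by
  constructor
  · rintro ⟨hunit, hcounit⟩ μ lam hμ hlam
    apply le_antisymm
    · set L := ⨅ y, lres (lam y) (phiStar ψ μ y) with hL
      refine le_iInf fun x => le_lres_iff.mpr ?_
      have h1 : (1 : Q) ≤ ⨆ y, ψ y x * φ x y := le_trans (hA.refl x) (hunit x x)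
      calc L * μ x = L * μ x * 1 := by rw [mul_one]
        _ ≤ L * μ x * ⨆ y, ψ y x * φ x y := mul_le_mul_right h1 _
        _ = ⨆ y, L * μ x * (ψ y x * φ x y) := Quantale.mul_iSup_distrib
        _ ≤ ⨆ y, lam y * φ x y := by
            refine iSup_mono fun y => ?_
            have h2 : L * (μ x * ψ y x) ≤ lam y := by
              have : L * phiStar ψ μ y ≤ lam y :=
                le_lres_iff.mp (iInf_le _ y)
              exact le_trans (mul_le_mul_right (le_iSup (fun x => μ x * ψ y x) x) L) this
            calc L * μ x * (ψ y x * φ x y) = L * (μ x * ψ y x) * φ x y := by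
                  rw [mul_assoc, mul_assoc, mul_assoc]
              _ ≤ lam y * φ x y := mul_le_mul_left h2 _
    · set R := ⨅ x, lres (phiStar φ lam x) (μ x) with hR
      refine le_iInf fun y => le_lres_iff.mpr ?_
      rw [phiStar, Quantale.mul_iSup_distrib]
      refine iSup_le fun x => ?_
      have h1 : R * μ x ≤ ⨆ y', lam y' * φ x y' := le_lres_iff.mp (iInf_le _ x)
      calc R * (μ x * ψ y x) = (R * μ x) * ψ y x := by rw [mul_assoc]
        _ ≤ (⨆ y', lam y' * φ x y') * ψ y x := mul_le_mul_left h1 _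
        _ = ⨆ y', lam y' * φ x y' * ψ y x := Quantale.iSup_mul_distrib
        _ ≤ lam y := by
            refine iSup_le fun y' => ?_
            calc lam y' * φ x y' * ψ y x = lam y' * (φ x y' * ψ y x) := by rw [mul_assoc]
              _ ≤ lam y' * 𝔹 y y' :=
                  mul_le_mul_right (le_trans (le_iSup _ x) (hcounit y y')) _
              _ ≤ lam y := hlam y y'
  · intro h
    constructor
    · intro x x'
      set μ : A → Q := fun a => 𝔸 a x' with hμdef
      have hμ : IsContraPsh 𝔸 μ := fun a b => hA.comp a b x'
      set lam : B → Q := phiStar ψ μ with hlamdef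
      have hlam : IsContraPsh 𝔹 lam := by
        intro y y'
        rw [hlamdef, phiStar, Quantale.iSup_mul_distrib]
        refine iSup_le fun a => ?_
        calc μ a * ψ y' a * 𝔹 y y' = μ a * (ψ y' a * 𝔹 y y') := by rw [mul_assoc]
          _ ≤ μ a * ψ y a := mul_le_mul_right (hψ.comp_right y y' a) _
          _ ≤ ⨆ a, μ a * ψ y a := le_iSup (fun a => μ a * ψ y a) a
      have key := h μ lam hμ hlam
      have h1 : (1 : Q) ≤ ⨅ y, lres (lam y) (phiStar ψ μ y) :=
        le_iInf fun y => le_lres_iff.mpr (by rw [one_mul])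
      rw [key] at h1
      have h2 : μ x ≤ phiStar φ lam x := by
        have := le_lres_iff.mp (le_trans h1 (iInf_le _ x))
        rwa [one_mul] at this
      refine le_trans h2 ?_
      rw [phiStar]
      refine iSup_le fun y => le_trans ?_ (le_iSup (fun y => ψ y x' * φ x y) y)
      refine mul_le_mul_left ?_ _
      rw [hlamdef, phiStar]
      exact iSup_le fun a => hψ.comp_left y x' a
    · intro y y'
      set lam : B → Q := fun b => 𝔹 b y' with hlamdef
      have hlam : IsContraPsh 𝔹 lam := fun a b => hB.comp a b y'
      set μ : A → Q := phiStar φ lam with hμdef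
      have hμ : IsContraPsh 𝔸 μ := by
        intro a b
        rw [hμdef, phiStar, Quantale.iSup_mul_distrib]
        refine iSup_le fun c => ?_
        calc lam c * φ b c * 𝔸 a b = lam c * (φ b c * 𝔸 a b) := by rw [mul_assoc]
          _ ≤ lam c * φ a c := mul_le_mul_right (hφ.comp_right a b c) _
          _ ≤ ⨆ c, lam c * φ a c := le_iSup (fun c => lam c * φ a c) c
      have key := h μ lam hμ hlam
      have h1 : (1 : Q) ≤ ⨅ x, lres (phiStar φ lam x) (μ x) :=
        le_iInf fun x => le_lres_iff.mpr (by rw [one_mul])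
      rw [← key] at h1
      have h2 : phiStar ψ μ y ≤ lam y := by
        have := le_lres_iff.mp (le_trans h1 (iInf_le _ y))
        rwa [one_mul] at this
      refine le_trans ?_ h2
      rw [phiStar]
      refine iSup_le fun x => le_trans ?_ (le_iSup (fun x => μ x * ψ y x) x)
      refine mul_le_mul_left ?_ _
      have : φ x y' ≤ μ x := by
        rw [hμdef, phiStar]
        refine le_trans ?_ (le_iSup (fun c => lam c * φ x c) y')
        calc φ x y' = 1 * φ x y' := (one_mul _).symm
          _ ≤ lam y' * φ x y' := mul_le_mul_left (hB.refl y') _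
      exact this
end

section
/- (Lemma 3.7) Let (𝔸,C) and (𝔹,D) be Q-closure spaces and F : 𝔸 → 𝔹 a Q-functor. Then F is continuous, i.e. F^→(C(μ))(y) ≤ D(F^→(μ))(y) for all μ ∈ P𝔸 and y ∈ B, if and only if the F-preimage of every closed presheaf is closed, i.e. for every λ ∈ P𝔹 with D(λ) = λ one has C(F^←(λ)) = F^←(λ). -/
open IsQuantale

variable {Q : Type*} [Monoid Q] [CompleteLattice Q] [IsQuantale Q]

/-- The direct image Q-functor `F^→ : P𝔸 → P𝔹`, `F^→(μ)(y) = ⨆ x, μ(x) * 𝔹(y,Fx)`. -/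
def fwdPsh {A B : Type*} {𝔸 : A → A → Q} {𝔹 : B → B → Q} (hB : IsQCat 𝔹) (F : A → B)
    (μ : CPsh 𝔸) : CPsh 𝔹 :=
  ⟨fun y => ⨆ x, μ.1 x * 𝔹 y (F x), by
    intro y y'
    rw [Quantale.iSup_mul_distrib]
    refine iSup_le fun x => le_trans ?_ (le_iSup _ x)
    rw [mul_assoc]
    exact mul_le_mul_right (hB.comp y y' (F x)) _⟩

/-- The inverse image Q-functor `F^← : P𝔹 → P𝔸`, `F^←(λ) = λ ∘ F`. -/
def bwdPsh {A B : Type*} {𝔸 : A → A → Q} {𝔹 : B → B → Q} {F : A → B}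
    (hF : IsQFunctor 𝔸 𝔹 F) (lam : CPsh 𝔹) : CPsh 𝔸 :=
  ⟨fun x => lam.1 (F x), fun x x' =>
    le_trans (mul_le_mul_right (hF x x') _) (lam.2 (F x) (F x'))⟩



lemma lres_mul_le (a b : Q) : lres a b * b ≤ a := by
  rw [lres, sSup_mul_distrib]
  exact iSup₂_le fun z hz => hz

lemma le_lres {a b z : Q} (h : z * b ≤ a) : z ≤ lres a b := le_sSup h

lemma one_le_lres {a b : Q} (h : b ≤ a) : (1 : Q) ≤ lres a b :=
  le_lres (by simpa using h)

lemma le_of_one_le_lres {a b : Q} (h : (1 : Q) ≤ lres a b) : b ≤ a :=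
  calc b = 1 * b := (one_mul b).symm
  _ ≤ lres a b * b := mul_le_mul_left h b
  _ ≤ a := lres_mul_le a b

/-- Lemma 3.7: a Q-functor between Q-closure spaces is continuous iff the preimage of
every closed presheaf is closed. -/
theorem continuous_iff_preimage_closed {A B : Type*} {𝔸 : A → A → Q} {𝔹 : B → B → Q}
    (hA : IsQCat 𝔸) (hB : IsQCat 𝔹)
    (C : CPsh 𝔸 → CPsh 𝔸)
    (hCext : ∀ (μ : CPsh 𝔸) (x : A), μ.1 x ≤ (C μ).1 x)
    (hCmono : ∀ μ μ' : CPsh 𝔸,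
      (⨅ x, lres (μ'.1 x) (μ.1 x)) ≤ ⨅ x, lres ((C μ').1 x) ((C μ).1 x))
    (hCidem : ∀ μ : CPsh 𝔸, C (C μ) = C μ)
    (D : CPsh 𝔹 → CPsh 𝔹)
    (hDext : ∀ (lam : CPsh 𝔹) (y : B), lam.1 y ≤ (D lam).1 y)
    (hDmono : ∀ lam lam' : CPsh 𝔹,
      (⨅ y, lres (lam'.1 y) (lam.1 y)) ≤ ⨅ y, lres ((D lam').1 y) ((D lam).1 y))
    (hDidem : ∀ lam : CPsh 𝔹, D (D lam) = D lam)
    (F : A → B) (hF : IsQFunctor 𝔸 𝔹 F) :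
    (∀ (μ : CPsh 𝔸) (y : B), (fwdPsh hB F (C μ)).1 y ≤ (D (fwdPsh hB F μ)).1 y) ↔
    (∀ lam : CPsh 𝔹, D lam = lam → C (bwdPsh hF lam) = bwdPsh hF lam) := by

  -- preliminary: order monotonicity of C and D
  have Cmono : ∀ μ μ' : CPsh 𝔸, (∀ x, μ.1 x ≤ μ'.1 x) → ∀ x, (C μ).1 x ≤ (C μ').1 x := by
    intro μ μ' h x
    have h1 : (1 : Q) ≤ ⨅ x, lres (μ'.1 x) (μ.1 x) := le_iInf fun x => one_le_lres (h x)
    exact le_of_one_le_lres ((h1.trans (hCmono μ μ')).trans (iInf_le _ x))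
  have Dmono : ∀ l l' : CPsh 𝔹, (∀ y, l.1 y ≤ l'.1 y) → ∀ y, (D l).1 y ≤ (D l').1 y := by
    intro l l' h y
    have h1 : (1 : Q) ≤ ⨅ y, lres (l'.1 y) (l.1 y) := le_iInf fun y => one_le_lres (h y)
    exact le_of_one_le_lres ((h1.trans (hDmono l l')).trans (iInf_le _ y))
  -- adjunction
  have adj1 : ∀ (μ : CPsh 𝔸) (l : CPsh 𝔹), (∀ y, (fwdPsh hB F μ).1 y ≤ l.1 y) →
      ∀ x, μ.1 x ≤ l.1 (F x) := by
    intro μ l h x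
    have : μ.1 x ≤ (fwdPsh hB F μ).1 (F x) := by
      refine le_trans ?_ (le_iSup _ x)
      calc μ.1 x = μ.1 x * 1 := (mul_one _).symm
      _ ≤ μ.1 x * 𝔹 (F x) (F x) := mul_le_mul_right (hB.refl (F x)) _
    exact this.trans (h (F x))
  have adj2 : ∀ (μ : CPsh 𝔸) (l : CPsh 𝔹), (∀ x, μ.1 x ≤ l.1 (F x)) →
      ∀ y, (fwdPsh hB F μ).1 y ≤ l.1 y := by
    intro μ l h y
    refine iSup_le fun x => ?_
    exact le_trans (mul_le_mul_left (h x) _) (l.2 y (F x))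
  constructor
  · intro hcont lam hlam
    refine Subtype.ext (funext fun x => le_antisymm ?_ (hCext _ x))
    have h1 : ∀ y, (fwdPsh hB F (bwdPsh hF lam)).1 y ≤ lam.1 y :=
      adj2 _ _ fun x => le_rfl
    have h2 : ∀ y, (D (fwdPsh hB F (bwdPsh hF lam))).1 y ≤ lam.1 y := by
      intro y
      calc (D (fwdPsh hB F (bwdPsh hF lam))).1 y ≤ (D lam).1 y := Dmono _ _ h1 y
      _ = lam.1 y := by rw [hlam]
    have h3 : ∀ y, (fwdPsh hB F (C (bwdPsh hF lam))).1 y ≤ lam.1 y :=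
      fun y => (hcont _ y).trans (h2 y)
    exact adj1 _ _ h3 x
  · intro hcl μ y
    set lam := D (fwdPsh hB F μ) with hlamdef
    have hlam : D lam = lam := hDidem _
    have hc := hcl lam hlam
    have h1 : ∀ x, μ.1 x ≤ (bwdPsh hF lam).1 x :=
      fun x => adj1 μ lam (fun y => hDext _ y) x
    have h2 : ∀ x, (C μ).1 x ≤ (bwdPsh hF lam).1 x := by
      intro x
      calc (C μ).1 x ≤ (C (bwdPsh hF lam)).1 x := Cmono _ _ h1 x
      _ = (bwdPsh hF lam).1 x := by rw [hc]
    exact adj2 _ lam h2 y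
end
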